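/- Let s be a weak composition and T an s-decreasing tree. The multi inversion set R defined by card_R(c,a) = s(c) if there exists b with a < b < c and card_T(b,a) = s(b), and card_R(c,a) = card_T(c,a) otherwise, is an s-tree-inversion set; the corresponding tree π↑(T) satisfies T ≼ π↑(T), is idempotent under π↑, and is an s-maximal-Tamari tree (card(b,a) = s(b) implies card(c,a) = s(c) for all c > b). -/
import Mathlib


/-- Planar rooted trees: leaves are unlabeled; internal nodes carry a natural
number label and an ordered list of children. -/
inductive STree : Type where
  | leaf : STree
  | node : ℕ → List STree → STree

namespace STree

mutual
  /-- `x` occurs as the label of an internal node of the tree. -/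
  def mem (x : ℕ) : STree → Bool
    | .leaf => false
    | .node a cs => x == a || memL x cs
  def memL (x : ℕ) : List STree → Bool
    | [] => false
    | t :: ts => mem x t || memL x ts
end

mutual
  /-- The list of internal node labels, in preorder. -/
  def labels : STree → List ℕ
    | .leaf => []
    | .node a cs => a :: labelsL cs
  def labelsL : List STree → List ℕ
    | [] => []
    | t :: ts => labels t ++ labelsL ts
end

mutual
  /-- Local well-formedness for the signature `s` : an internal node labeled `a`
  has `s a + 1` children, and all labels below it are smaller than `a`. -/
  def wf (s : ℕ → ℕ) : STree → Prop
    | .leaf => True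
    | .node a cs => cs.length = s a + 1 ∧ (∀ b ∈ labelsL cs, b < a) ∧ wfL s cs
  def wfL (s : ℕ → ℕ) : List STree → Prop
    | [] => True
    | t :: ts => wf s t ∧ wfL s ts
end

/-- `T` is an `s`-decreasing tree: its internal nodes are labeled bijectively by
`1, …, n`, node `i` has `s i + 1` ordered children, and all descendants of a node
have smaller labels. -/
def IsSDecreasingTree (n : ℕ) (s : ℕ → ℕ) (T : STree) : Prop :=
  wf s T ∧ (labels T).Perm (List.range' 1 n)

/-- Index of the first tree of the list containing the label `x`. -/
def idxOf (x : ℕ) : List STree → ℕ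
  | [] => 0
  | t :: ts => if mem x t then 0 else idxOf x ts + 1

mutual
  /-- The cardinality `card_T(y,x)` of the pair `(y,x)` in the tree:
  `0` if `x` is (weakly) left of `y`, `i` if `x` lies in the `i`-th child
  subtree of `y`, and `s y` if `x` is right of `y`. -/
  def card (s : ℕ → ℕ) (y x : ℕ) : STree → ℕ
    | .leaf => 0
    | .node a cs => if a = y then idxOf x cs else cardL s y x cs
  def cardL (s : ℕ → ℕ) (y x : ℕ) : List STree → ℕ
    | [] => 0
    | t :: ts =>
      if mem y t then
        (if mem x t then card s y x t else if memL x ts then s y else 0)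
      else (if mem x t then 0 else cardL s y x ts)
end

/-- The tree-inversion multiset of `T`, as a multiplicity function on pairs
`(y,x)` with `1 ≤ x < y ≤ n`. -/
def treeInv (n : ℕ) (s : ℕ → ℕ) (T : STree) : ℕ → ℕ → ℕ := fun y x =>
  if 1 ≤ x ∧ x < y ∧ y ≤ n then card s y x T else 0

/-- A multi inversion set on `1, …, n` bounded by the weak composition `s`. -/
def IsMultiInvSet (n : ℕ) (s : ℕ → ℕ) (I : ℕ → ℕ → ℕ) : Prop :=
  (∀ y x, I y x ≤ s y) ∧ ∀ y x, ¬(1 ≤ x ∧ x < y ∧ y ≤ n) → I y x = 0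

/-- Transitivity: for `a < b < c`, `card(c,b) = i` implies `card(b,a) = 0` or
`card(c,a) ≥ i`. -/
def InvTransitive (I : ℕ → ℕ → ℕ) : Prop :=
  ∀ a b c : ℕ, a < b → b < c → I b a = 0 ∨ I c b ≤ I c a

/-- Planarity: for `a < b < c`, `card(c,a) = i` implies `card(b,a) = s b` or
`card(c,b) ≥ i`. -/
def InvPlanar (s : ℕ → ℕ) (I : ℕ → ℕ → ℕ) : Prop :=
  ∀ a b c : ℕ, a < b → b < c → I b a = s b ∨ I c a ≤ I c b

/-- An `s`-tree-inversion set: a bounded multi inversion set that is transitive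
and planar. -/
def IsTreeInvSet (n : ℕ) (s : ℕ → ℕ) (I : ℕ → ℕ → ℕ) : Prop :=
  IsMultiInvSet n s I ∧ InvTransitive I ∧ InvPlanar s I

/-- Inclusion of multi inversion sets: pointwise comparison of multiplicities. -/
def invLE (I J : ℕ → ℕ → ℕ) : Prop := ∀ y x, I y x ≤ J y x

/-- The `s`-weak order: inclusion of tree-inversion multisets. -/
def sWeakLE (n : ℕ) (s : ℕ → ℕ) (T R : STree) : Prop :=
  invLE (treeInv n s T) (treeInv n s R)

/-- Union of multi inversion sets: pointwise maximum. -/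
def invUnion (I J : ℕ → ℕ → ℕ) : ℕ → ℕ → ℕ := fun y x => max (I y x) (J y x)

/-- Transitive closure: `tc I (c,a)` is the maximal value of `I (b₁, b₂)` over
all transitivity paths `c = b₁ > b₂ > … > b_k = a` (consecutive entries have
positive multiplicity). -/
noncomputable def tc (I : ℕ → ℕ → ℕ) : ℕ → ℕ → ℕ := fun c a =>
  sSup {v | ∃ (b : ℕ) (l : List ℕ),
    List.Chain (fun u w => w < u ∧ 0 < I u w) c (b :: l) ∧
    (b :: l).getLast (List.cons_ne_nil b l) = a ∧ v = I c b}

/-- Adding the inversion `(c,a)`: increase its multiplicity by one. -/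
def addInv (I : ℕ → ℕ → ℕ) (c a : ℕ) : ℕ → ℕ → ℕ := fun y x =>
  if y = c ∧ x = a then I y x + 1 else I y x

mutual
  /-- `a` is a (proper) descendant of the node labeled `c`. -/
  def descIn (c a : ℕ) : STree → Bool
    | .leaf => false
    | .node b cs => (b == c && memL a cs) || descInL c a cs
  def descInL (c a : ℕ) : List STree → Bool
    | [] => false
    | t :: ts => descIn c a t || descInL c a ts
end

mutual
  /-- `a` belongs to the rightmost child subtree of the node labeled `c`. -/
  def inRight (c a : ℕ) : STree → Bool
    | .leaf => false
    | .node b cs =>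
      (b == c && (match cs.getLast? with
        | some t => mem a t
        | none => false)) || inRightL c a cs
  def inRightL (c a : ℕ) : List STree → Bool
    | [] => false
    | t :: ts => inRight c a t || inRightL c a ts
end

mutual
  /-- `a` belongs to the leftmost child subtree of the node labeled `c`. -/
  def inLeft (c a : ℕ) : STree → Bool
    | .leaf => false
    | .node b cs =>
      (b == c && (match cs.head? with
        | some t => mem a t
        | none => false)) || inLeftL c a cs
  def inLeftL (c a : ℕ) : List STree → Bool
    | [] => false
    | t :: ts => inLeft c a t || inLeftL c a ts
end

mutual
  /-- The rightmost child subtree of the node labeled `a` is empty (a leaf). -/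
  def rightEmpty (a : ℕ) : STree → Bool
    | .leaf => false
    | .node b cs =>
      (b == a && (match cs.getLast? with
        | some .leaf => true
        | _ => false)) || rightEmptyL a cs
  def rightEmptyL (a : ℕ) : List STree → Bool
    | [] => false
    | t :: ts => rightEmpty a t || rightEmptyL a ts
end

/-- `(a,c)` is a tree-ascent of `T`: `a` is a descendant of `c`, not in the
rightmost subtree of `c`; `a` lies in the rightmost subtree of any `b` with
`a < b < c` having `a` as a descendant; and if `s a > 0` the rightmost
(strict right) subtree of `a` is empty. -/
def IsTreeAscent (s : ℕ → ℕ) (T : STree) (a c : ℕ) : Prop :=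
  a < c ∧ descIn c a T = true ∧ inRight c a T = false ∧
  (∀ b : ℕ, a < b → b < c → descIn b a T = true → inRight b a T = true) ∧
  (0 < s a → rightEmpty a T = true)

/-- `a` is the root label of the tree. -/
def hasRoot (a : ℕ) : STree → Bool
  | .leaf => false
  | .node b _ => a == b

mutual
  /-- `a` is a direct child of the node `c`, but not its rightmost child. -/
  def nonRightChild (c a : ℕ) : STree → Bool
    | .leaf => false
    | .node b cs => (b == c && cs.dropLast.any (hasRoot a)) || nonRightChildL c a cs
  def nonRightChildL (c a : ℕ) : List STree → Bool
    | [] => false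
    | t :: ts => nonRightChild c a t || nonRightChildL c a ts
end

/-- `(a,c)` is a Tamari-ascent of `T`: `a` is a non-right child of `c`. -/
def IsTamariAscent (T : STree) (a c : ℕ) : Prop :=
  a < c ∧ nonRightChild c a T = true

mutual
  /-- Horizontal mirror image of a tree: the order of children is reversed at
  every internal node. -/
  def mirror : STree → STree
    | .leaf => .leaf
    | .node a cs => .node a (mirrorL cs)
  def mirrorL : List STree → List STree
    | [] => []
    | t :: ts => mirrorL ts ++ [mirror t]
end

/-- `T` is an `s`-Tamari tree: `card(c,a) ≤ card(c,b)` for all `a < b < c`. -/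
def TamariProp (n : ℕ) (s : ℕ → ℕ) (T : STree) : Prop :=
  ∀ a b c : ℕ, a < b → b < c → treeInv n s T c a ≤ treeInv n s T c b

/-- `T` is an `s`-maximal-Tamari tree: `card(b,a) = s b` implies
`card(c,a) = s c` for all `c > b`. -/
def MaxTamariProp (n : ℕ) (s : ℕ → ℕ) (T : STree) : Prop :=
  ∀ a b c : ℕ, 1 ≤ a → a < b → b < c → c ≤ n →
    treeInv n s T b a = s b → treeInv n s T c a = s c

/-- The projection `π↓` on inversion sets:
`card_Q(c,a) = min { card_T(c,b) : a ≤ b < c }`. -/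
noncomputable def pidownInv (n : ℕ) (s : ℕ → ℕ) (T : STree) : ℕ → ℕ → ℕ :=
  fun c a => sInf {v | ∃ b : ℕ, a ≤ b ∧ b < c ∧ v = treeInv n s T c b}

open scoped Classical in
/-- The projection `π↑` on inversion sets: `card_R(c,a) = s c` if there is
`a < b < c` with `card_T(b,a) = s b`, and `card_R(c,a) = card_T(c,a)` otherwise. -/
noncomputable def piupInv (n : ℕ) (s : ℕ → ℕ) (T : STree) : ℕ → ℕ → ℕ :=
  fun c a =>
    if 1 ≤ a ∧ a < c ∧ c ≤ n then
      if ∃ b : ℕ, a < b ∧ b < c ∧ treeInv n s T b a = s b then s c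
      else treeInv n s T c a
    else 0

end STree
namespace STree

section Helpers

mutual
theorem mem_eq (x : ℕ) : ∀ T : STree, mem x T = true ↔ x ∈ labels T
  | .leaf => by simp [mem, labels]
  | .node a cs => by
      simp [mem, labels, memL_eq x cs]
theorem memL_eq (x : ℕ) : ∀ cs : List STree, memL x cs = true ↔ x ∈ labelsL cs
  | [] => by simp [memL, labelsL]
  | t :: ts => by simp [memL, labelsL, mem_eq x t, memL_eq x ts]
end

theorem idxOf_lt (x : ℕ) : ∀ cs : List STree, memL x cs = true → idxOf x cs < cs.length
  | t :: ts, h => by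
      by_cases hm : mem x t
      · simp [idxOf, hm]
      · have h' : memL x ts = true := by
          simp [memL, hm] at h; exact h
        simpa [idxOf, hm] using idxOf_lt x ts h'

theorem cardL_of_not_mem (s : ℕ → ℕ) (y x : ℕ) :
    ∀ cs : List STree, memL x cs = false → cardL s y x cs = 0
  | [], _ => by simp [cardL]
  | t :: ts, h => by
      have h1 : mem x t = false := by
        cases hm : mem x t <;> simp [memL, hm] at h ⊢
      have h2 : memL x ts = false := by
        cases hm : memL x ts <;> simp [memL, h1, hm] at h ⊢
      by_cases hy : mem y t <;>
        simp [cardL, hy, h1, h2, cardL_of_not_mem s y x ts h2]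

mutual
theorem card_le (s : ℕ → ℕ) (x y : ℕ) (hxy : x ≠ y) :
    ∀ T : STree, wf s T → mem x T = true → card s y x T ≤ s y
  | .leaf, _, _ => by simp [card]
  | .node a cs, hw, hm => by
      obtain ⟨hlen, _, hwl⟩ := hw
      by_cases hay : a = y
      · subst hay
        have hml : memL x cs = true := by
          simp [mem] at hm
          rcases hm with hm | hm
          · exact absurd hm hxy
          · exact hm
        have := idxOf_lt x cs hml
        rw [hlen] at this
        simpa [card] using Nat.lt_succ_iff.mp this
      · rw [card, if_neg hay]
        by_cases hml : memL x cs = true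
        · exact cardL_le s x y hxy cs hwl hml
        · rw [cardL_of_not_mem s y x cs (by simpa using hml)]
          exact Nat.zero_le _
theorem cardL_le (s : ℕ → ℕ) (x y : ℕ) (hxy : x ≠ y) :
    ∀ cs : List STree, wfL s cs → memL x cs = true → cardL s y x cs ≤ s y
  | t :: ts, hw, hm => by
      obtain ⟨hwt, hwts⟩ := hw
      by_cases hyt : mem y t <;> by_cases hxt : mem x t
      · simpa [cardL, hyt, hxt] using card_le s x y hxy t hwt hxt
      · by_cases hts : memL x ts <;> simp [cardL, hyt, hxt, hts]
      · simp [cardL, hyt, hxt]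
      · have h' : memL x ts = true := by simp [memL, hxt] at hm; exact hm
        simpa [cardL, hyt, hxt] using cardL_le s x y hxy ts hwts h'
end

end Helpers

end STree
namespace STree
section Helpers2

theorem cardL_zero_of_idx (s : ℕ → ℕ) (b a : ℕ) :
    ∀ cs : List STree, memL a cs = true → memL b cs = true →
      idxOf a cs < idxOf b cs → cardL s b a cs = 0
  | t :: ts, ha, hb, hidx => by
      by_cases hat : mem a t
      · have hbt : mem b t = false := by
          cases h : mem b t
          · rfl
          · simp [idxOf, hat, h] at hidx
        simp [cardL, hat, hbt]
      · have hbt : mem b t = false := by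
          cases h : mem b t
          · rfl
          · simp [idxOf, hat, h] at hidx
        have ha' : memL a ts = true := by simp [memL, hat] at ha; exact ha
        have hb' : memL b ts = true := by simp [memL, hbt] at hb; exact hb
        have hidx' : idxOf a ts < idxOf b ts := by
          simpa [idxOf, hat, hbt] using hidx
        simpa [cardL, hat, hbt] using cardL_zero_of_idx s b a ts ha' hb' hidx'

theorem cardL_s_of_idx (s : ℕ → ℕ) (b a : ℕ) :
    ∀ cs : List STree, memL a cs = true → memL b cs = true →
      idxOf b cs < idxOf a cs → cardL s b a cs = s b
  | t :: ts, ha, hb, hidx => by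
      by_cases hbt : mem b t
      · have hat : mem a t = false := by
          cases h : mem a t
          · rfl
          · simp [idxOf, hbt, h] at hidx
        have ha' : memL a ts = true := by simp [memL, hat] at ha; exact ha
        simp [cardL, hat, hbt, ha']
      · have hat : mem a t = false := by
          cases h : mem a t
          · rfl
          · simp [idxOf, hbt, h] at hidx
        have ha' : memL a ts = true := by simp [memL, hat] at ha; exact ha
        have hb' : memL b ts = true := by simp [memL, hbt] at hb; exact hb
        have hidx' : idxOf b ts < idxOf a ts := by
          simpa [idxOf, hat, hbt] using hidx
        simpa [cardL, hat, hbt] using cardL_s_of_idx s b a ts ha' hb' hidx'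

mutual
theorem tp_t (s : ℕ → ℕ) (a b c : ℕ) (hab : a < b) (hbc : b < c) :
    ∀ T : STree, wf s T → mem a T = true → mem b T = true → mem c T = true →
      (card s b a T = 0 ∨ card s c b T ≤ card s c a T) ∧
      (card s b a T = s b ∨ card s c a T ≤ card s c b T)
  | .leaf, _, ha, _, _ => by simp [mem] at ha
  | .node r cs, hw, ha, hb, hc => by
      obtain ⟨hlen, hsmall, hwl⟩ := hw
      by_cases hrc : r = c
      · subst hrc
        have hma : memL a cs = true := by
          simp [mem] at ha
          rcases ha with h | h
          · omega
          · exact h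
        have hmb : memL b cs = true := by
          simp [mem] at hb
          rcases hb with h | h
          · omega
          · exact h
        have hbr : ¬ (r = b) := by omega
        rw [card, card, card, if_pos rfl, if_pos rfl, if_neg hbr]
        rcases lt_trichotomy (idxOf a cs) (idxOf b cs) with h | h | h
        · constructor
          · exact Or.inl (cardL_zero_of_idx s b a cs hma hmb h)
          · exact Or.inr (Nat.le_of_lt h)
        · constructor
          · exact Or.inr (Nat.le_of_eq h.symm)
          · exact Or.inr (Nat.le_of_eq h)
        · constructor
          · exact Or.inr (Nat.le_of_lt h)
          · exact Or.inl (cardL_s_of_idx s b a cs hma hmb h)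
      · have hmc : memL c cs = true := by
          simp [mem] at hc
          rcases hc with h | h
          · omega
          · exact h
        have hcr : c < r := by
          have := hsmall c ((memL_eq c cs).mp hmc)
          exact this
        have hra : ¬ (r = a) := by omega
        have hrb : ¬ (r = b) := by omega
        have hma : memL a cs = true := by
          simp [mem] at ha
          rcases ha with h | h
          · omega
          · exact h
        have hmb : memL b cs = true := by
          simp [mem] at hb
          rcases hb with h | h
          · omega
          · exact h
        have := tp_l s a b c hab hbc cs hwl hma hmb hmc
        simpa [card, hra, hrb, hrc, Ne.symm] using this
theorem tp_l (s : ℕ → ℕ) (a b c : ℕ) (hab : a < b) (hbc : b < c) :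
    ∀ cs : List STree, wfL s cs → memL a cs = true → memL b cs = true → memL c cs = true →
      (cardL s b a cs = 0 ∨ cardL s c b cs ≤ cardL s c a cs) ∧
      (cardL s b a cs = s b ∨ cardL s c a cs ≤ cardL s c b cs)
  | [], _, ha, _, _ => by simp [memL] at ha
  | t :: ts, hw, ha, hb, hc => by
      obtain ⟨hwt, hwts⟩ := hw
      by_cases hat : mem a t = true <;> by_cases hbt : mem b t = true <;>
        by_cases hct : mem c t = true
      · -- all in t
        have := tp_t s a b c hab hbc t hwt hat hbt hct
        simpa [cardL, hat, hbt, hct] using this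
      · -- a,b in t, c in ts
        simp [cardL, hat, hbt, hct]
      · -- a,c in t, b in ts
        have hb' : memL b ts = true := by simp [memL, hbt] at hb; exact hb
        have hbound : card s c a t ≤ s c := card_le s a c (by omega) t hwt hat
        simp [cardL, hat, hbt, hct, hb']
        exact Or.inr hbound
      · -- a in t, b,c in ts
        simp [cardL, hat, hbt, hct]
      · -- b,c in t, a in ts
        have ha' : memL a ts = true := by simp [memL, hat] at ha; exact ha
        have hbound : card s c b t ≤ s c := card_le s b c (by omega) t hwt hbt
        simp [cardL, hat, hbt, hct, ha']
        exact Or.inr hbound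
      · -- b in t, a,c in ts
        have ha' : memL a ts = true := by simp [memL, hat] at ha; exact ha
        simp [cardL, hat, hbt, hct, ha']
      · -- c in t, a,b in ts
        have ha' : memL a ts = true := by simp [memL, hat] at ha; exact ha
        have hb' : memL b ts = true := by simp [memL, hbt] at hb; exact hb
        simp [cardL, hat, hbt, hct, ha', hb']
      · -- none in t
        have ha' : memL a ts = true := by simp [memL, hat] at ha; exact ha
        have hb' : memL b ts = true := by simp [memL, hbt] at hb; exact hb
        have hc' : memL c ts = true := by simp [memL, hct] at hc; exact hc
        have := tp_l s a b c hab hbc ts hwts ha' hb' hc'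
        simpa [cardL, hat, hbt, hct] using this
end

end Helpers2
end STree
namespace STree
section Helpers3

variable {n : ℕ} {s : ℕ → ℕ} {T : STree}

theorem mem_of_range (hT : IsSDecreasingTree n s T) {x : ℕ} (h1 : 1 ≤ x) (h2 : x ≤ n) :
    mem x T = true := by
  rw [mem_eq]
  exact hT.2.symm.subset (by simp [List.mem_range'_1]; omega)

theorem treeInv_le (hT : IsSDecreasingTree n s T) (y x : ℕ) : treeInv n s T y x ≤ s y := by
  unfold treeInv
  split
  · next h =>
    exact card_le s x y (by omega) T hT.1 (mem_of_range hT h.1 (by omega))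
  · exact Nat.zero_le _

theorem treeInv_trans (hT : IsSDecreasingTree n s T) :
    InvTransitive (treeInv n s T) := by
  intro a b c hab hbc
  by_cases ha : 1 ≤ a
  · by_cases hc : c ≤ n
    · have hma := mem_of_range (x := a) hT ha (by omega)
      have hmb := mem_of_range (x := b) hT (by omega) (by omega)
      have hmc := mem_of_range (x := c) hT (by omega) hc
      have := (tp_t s a b c hab hbc T hT.1 hma hmb hmc).1
      simpa [treeInv, ha, hab, hbc, hc, show a < c by omega, show 1 ≤ b by omega,
        show b ≤ n by omega] using this
    · right
      simp [treeInv, hc]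
  · left
    simp [treeInv, show ¬ (1 ≤ a) from ha]

theorem treeInv_planar (hT : IsSDecreasingTree n s T) :
    InvPlanar s (treeInv n s T) := by
  intro a b c hab hbc
  by_cases ha : 1 ≤ a
  · by_cases hc : c ≤ n
    · have hma := mem_of_range (x := a) hT ha (by omega)
      have hmb := mem_of_range (x := b) hT (by omega) (by omega)
      have hmc := mem_of_range (x := c) hT (by omega) hc
      have := (tp_t s a b c hab hbc T hT.1 hma hmb hmc).2
      simpa [treeInv, ha, hab, hbc, hc, show a < c by omega, show 1 ≤ b by omega,
        show b ≤ n by omega] using this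
    · right
      simp [treeInv, hc, show ¬ (c ≤ n) from hc]
  · right
    simp [treeInv, show ¬ (1 ≤ a) from ha]

/-- witness extraction -/
theorem piup_witness {a b : ℕ}
    (ha : 1 ≤ a) (hab : a < b) (hbn : b ≤ n)
    (h : piupInv n s T b a = s b) :
    ∃ b', a < b' ∧ b' ≤ b ∧ treeInv n s T b' a = s b' := by
  rw [piupInv] at h
  rw [if_pos ⟨ha, hab, hbn⟩] at h
  by_cases hW : ∃ x : ℕ, a < x ∧ x < b ∧ treeInv n s T x a = s x
  · obtain ⟨x, h1, h2, h3⟩ := hW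
    exact ⟨x, h1, Nat.le_of_lt h2, h3⟩
  · rw [if_neg hW] at h
    exact ⟨b, hab, Nat.le_refl b, h⟩

theorem piup_le (hT : IsSDecreasingTree n s T) (y x : ℕ) : piupInv n s T y x ≤ s y := by
  rw [piupInv]
  split
  · split
    · exact Nat.le_refl _
    · exact treeInv_le hT y x
  · exact Nat.zero_le _

end Helpers3
end STree
open STree in
/-- The projection `π↑`: for any `s`-decreasing tree `T`, the multi inversion
set given by `card_R(c,a) = s c` if some `a < b < c` has `card_T(b,a) = s b`
and `card_R(c,a) = card_T(c,a)` otherwise, is an `s`-tree-inversion set; the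
corresponding tree is above `T`, `π↑` is idempotent on it, and it is an
`s`-maximal-Tamari tree. -/
theorem piup_projection (n : ℕ) (s : ℕ → ℕ) (T : STree)
    (hT : IsSDecreasingTree n s T) :
    IsTreeInvSet n s (piupInv n s T) ∧
    (∀ T' : STree, IsSDecreasingTree n s T' →
      treeInv n s T' = piupInv n s T →
      sWeakLE n s T T' ∧ piupInv n s T' = treeInv n s T' ∧
      MaxTamariProp n s T') := by
  classical
  have hIle : ∀ y x, treeInv n s T y x ≤ s y := treeInv_le hT
  have htr := treeInv_trans hT
  have hpl := treeInv_planar hT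
  have hPle : ∀ y x, piupInv n s T y x ≤ s y := piup_le hT
  have hPzero : ∀ y x, ¬(1 ≤ x ∧ x < y ∧ y ≤ n) → piupInv n s T y x = 0 := by
    intro y x h; rw [piupInv, if_neg h]
  have hPpos : ∀ c a, (1 ≤ a ∧ a < c ∧ c ≤ n) →
      (∃ b, a < b ∧ b < c ∧ treeInv n s T b a = s b) → piupInv n s T c a = s c := by
    intro c a h hW; rw [piupInv, if_pos h, if_pos hW]
  have hPneg : ∀ c a, (1 ≤ a ∧ a < c ∧ c ≤ n) →
      ¬(∃ b, a < b ∧ b < c ∧ treeInv n s T b a = s b) →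
      piupInv n s T c a = treeInv n s T c a := by
    intro c a h hW; rw [piupInv, if_pos h, if_neg hW]
  refine ⟨⟨⟨hPle, hPzero⟩, ?_, ?_⟩, ?_⟩
  · -- transitivity
    intro a b c hab hbc
    by_cases hr : 1 ≤ a ∧ a < b ∧ b ≤ n
    case neg => exact Or.inl (hPzero b a hr)
    by_cases hcn : c ≤ n
    case neg =>
      refine Or.inr ?_
      rw [hPzero c b (by omega)]
      exact Nat.zero_le _
    obtain ⟨ha1, -, hbn⟩ := hr
    have hrba : 1 ≤ a ∧ a < b ∧ b ≤ n := ⟨ha1, hab, hbn⟩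
    have hrca : 1 ≤ a ∧ a < c ∧ c ≤ n := ⟨ha1, by omega, hcn⟩
    have hrcb : 1 ≤ b ∧ b < c ∧ c ≤ n := ⟨by omega, hbc, hcn⟩
    by_cases hWba : ∃ x, a < x ∧ x < b ∧ treeInv n s T x a = s x
    · refine Or.inr ?_
      obtain ⟨x, h1, h2, h3⟩ := hWba
      rw [hPpos c a hrca ⟨x, h1, by omega, h3⟩]
      exact hPle c b
    by_cases hWca : ∃ x, a < x ∧ x < c ∧ treeInv n s T x a = s x
    · refine Or.inr ?_
      rw [hPpos c a hrca hWca]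
      exact hPle c b
    by_cases hIba : treeInv n s T b a = 0
    · refine Or.inl ?_
      rw [hPneg b a hrba hWba]
      exact hIba
    refine Or.inr ?_
    have hWcb : ¬ ∃ x, b < x ∧ x < c ∧ treeInv n s T x b = s x := by
      rintro ⟨x, h1, h2, h3⟩
      rcases htr a b x hab h1 with h | h
      · exact hIba h
      · exact hWca ⟨x, by omega, h2, Nat.le_antisymm (hIle x a) (h3 ▸ h)⟩
    rw [hPneg c b hrcb hWcb, hPneg c a hrca hWca]
    rcases htr a b c hab hbc with h | h
    · exact absurd h hIba
    · exact h
  · -- planarity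
    intro a b c hab hbc
    by_cases hra : 1 ≤ a
    case neg =>
      refine Or.inr ?_
      rw [hPzero c a (by omega)]
      exact Nat.zero_le _
    by_cases hcn : c ≤ n
    case neg =>
      refine Or.inr ?_
      rw [hPzero c a (by omega)]
      exact Nat.zero_le _
    have hrba : 1 ≤ a ∧ a < b ∧ b ≤ n := ⟨hra, hab, by omega⟩
    have hrca : 1 ≤ a ∧ a < c ∧ c ≤ n := ⟨hra, by omega, hcn⟩
    have hrcb : 1 ≤ b ∧ b < c ∧ c ≤ n := ⟨by omega, hbc, hcn⟩
    by_cases hWba : ∃ x, a < x ∧ x < b ∧ treeInv n s T x a = s x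
    · exact Or.inl (hPpos b a hrba hWba)
    by_cases hIba : treeInv n s T b a = s b
    · refine Or.inl ?_
      rw [hPneg b a hrba hWba]
      exact hIba
    refine Or.inr ?_
    by_cases hWca : ∃ x, a < x ∧ x < c ∧ treeInv n s T x a = s x
    · obtain ⟨x, h1, h2, h3⟩ := hWca
      have hbx : b < x := by
        rcases Nat.lt_trichotomy x b with h | h | h
        · exact absurd ⟨x, h1, h, h3⟩ hWba
        · exact absurd (h ▸ h3) hIba
        · exact h
      have hWcb : ∃ y, b < y ∧ y < c ∧ treeInv n s T y b = s y := by
        rcases hpl a b x hab hbx with h | h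
        · exact absurd h hIba
        · exact ⟨x, hbx, h2, Nat.le_antisymm (hIle x b) (h3 ▸ h)⟩
      rw [hPpos c a hrca ⟨x, h1, h2, h3⟩, hPpos c b hrcb hWcb]
    · rw [hPneg c a hrca hWca]
      by_cases hWcb : ∃ y, b < y ∧ y < c ∧ treeInv n s T y b = s y
      · rw [hPpos c b hrcb hWcb]
        exact hIle c a
      · rw [hPneg c b hrcb hWcb]
        rcases hpl a b c hab hbc with h | h
        · exact absurd h hIba
        · exact h
  · -- the tree above
    intro T' hT' hEq
    have hW'up : ∀ a c, 1 ≤ a → a < c → c ≤ n →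
        (∃ b, a < b ∧ b < c ∧ treeInv n s T' b a = s b) →
        treeInv n s T' c a = s c := by
      rintro a c ha hac hcn ⟨b, h1, h2, h3⟩
      rw [hEq] at h3 ⊢
      obtain ⟨b', hb1, hb2, hb3⟩ :=
        piup_witness (n := n) (s := s) (T := T) ha h1 (by omega) h3
      exact hPpos c a ⟨ha, hac, hcn⟩ ⟨b', hb1, by omega, hb3⟩
    refine ⟨?_, ?_, ?_⟩
    · -- sWeakLE
      intro y x
      rw [hEq]
      by_cases hr : 1 ≤ x ∧ x < y ∧ y ≤ n
      · by_cases hW : ∃ b, x < b ∧ b < y ∧ treeInv n s T b x = s b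
        · rw [hPpos y x hr hW]
          exact hIle y x
        · rw [hPneg y x hr hW]
      · simp only [treeInv]
        rw [if_neg hr]
        exact Nat.zero_le _
    · -- idempotence
      funext c a
      by_cases hr : 1 ≤ a ∧ a < c ∧ c ≤ n
      · rw [piupInv]
        rw [if_pos hr]
        by_cases hW : ∃ b, a < b ∧ b < c ∧ treeInv n s T' b a = s b
        · rw [if_pos hW, hW'up a c hr.1 hr.2.1 hr.2.2 hW]
        · rw [if_neg hW]
      · rw [piupInv, if_neg hr]
        simp only [treeInv]
        rw [if_neg hr]
    · -- MaxTamari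
      intro a b c h1 h2 h3 h4 h5
      exact hW'up a c h1 (by omega) h4 ⟨b, h2, h3, h5⟩
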